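/- The map sending a d̃-closed r-form φ to θ∧φ induces a well-defined homomorphism c : H^r_{d̃}(M) → H^{r+1}_{dR}(M) from the twisted cohomology to de Rham cohomology: if φ is d̃-closed then θ∧φ is d-closed, and if φ = d̃ψ with ψ in the twisted complex then θ∧φ is d-exact. -/
import Mathlib


/-!
STATEMENT 10: The map sending a `d̃`-closed `r`-form `φ` to `θ∧φ` induces a well-defined
homomorphism `c : H^r_{d̃}(M) → H^{r+1}_{dR}(M)`: if `φ` is `d̃`-closed then `θ∧φ` is
`d`-closed, and if `φ = d̃ψ` with `ψ` in the twisted complex (`θ∧dψ = 0`) then `θ∧φ`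
is `d`-exact.

Abstract model of the de Rham complex of a smooth manifold `M` (Mathlib lacks a de Rham
complex on manifolds): `Ω : ℤ → Type` spaces of forms, `d` exterior derivative,
`w1` wedge with a 1-form.
-/

section
variable (Ω : ℤ → Type) [∀ n, AddCommGroup (Ω n)] [∀ n, Module ℝ (Ω n)]

variable (d : ∀ n : ℤ, Ω n →ₗ[ℝ] Ω (n+1)) (w1 : ∀ n : ℤ, Ω 1 →ₗ[ℝ] Ω n →ₗ[ℝ] Ω (n+1))

/-- The twisted operator `d̃φ = dφ - (r/2) θ∧φ` on `r`-forms. -/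
noncomputable def dtilde (θ : Ω 1) (n : ℤ) : Ω n →ₗ[ℝ] Ω (n+1) :=
  d n - ((n : ℝ)/2) • (w1 n θ)

theorem twisted_to_deRham_map_well_defined
    (θ : Ω 1) (hθ : d 1 θ = 0)
    (hd2 : ∀ (n : ℤ) (φ : Ω n), d (n+1) (d n φ) = 0)
    -- Leibniz rule for the closed 1-form `θ`: `d(θ∧φ) = -θ∧dφ`
    (hleib : ∀ (n : ℤ) (φ : Ω n), d (n+1) (w1 n θ φ) = - w1 (n+1) θ (d n φ))
    -- `θ∧θ∧φ = 0`
    (hww : ∀ (n : ℤ) (φ : Ω n), w1 (n+1) θ (w1 n θ φ) = 0) :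
    -- if `φ` is `d̃`-closed then `θ∧φ` is `d`-closed …
    (∀ (n : ℤ) (φ : Ω n), dtilde Ω d w1 θ n φ = 0 → d (n+1) (w1 n θ φ) = 0)
    -- … and if `φ = d̃ψ` with `θ∧dψ = 0` then `θ∧φ` is `d`-exact.
    ∧ (∀ (n : ℤ) (ψ : Ω n), w1 (n+1) θ (d n ψ) = 0 →
        ∃ χ : Ω (n+1), d (n+1) χ = w1 (n+1) θ (dtilde Ω d w1 θ n ψ)) := by
  constructor
  · intro n φ hφ
    have hdφ : d n φ = ((n : ℝ)/2) • (w1 n θ φ) := by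
      have := hφ
      simp only [dtilde, LinearMap.sub_apply, LinearMap.smul_apply, sub_eq_zero] at this
      exact this
    rw [hleib, hdφ, map_smul, hww, smul_zero, neg_zero]
  · intro n ψ hψ
    refine ⟨0, ?_⟩
    simp only [dtilde, LinearMap.sub_apply, LinearMap.smul_apply, map_sub, map_smul,
      hψ, hww, smul_zero, sub_zero, map_zero]

end
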